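/- Let m ≥ n ≥ 1, U an invertible n×n real matrix, and V a real (m−n)×n matrix. On the convex set Ω = {x ∈ ℝᵐ : Uᵀ diag(e^{x_i})_{i≤n} U − Vᵀ diag(e^{x_j})_{j>n} V > 0}, the function φ(x) = log det(Uᵀ diag(e^{x_i})_{i≤n} U − Vᵀ diag(e^{x_j})_{j>n} V) is concave. -/

import Mathlib

/-!
Write `A(x, y) = Uᵀ diag(eˣ) U - Vᵀ diag(eʸ) V`. The hypograph of `log det A` on `Ω` is
`{(p, r) | A p ≥ 0, eʳ ≤ det A p}`, a closed set, and a closed midpoint-convex set is convex. So it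
suffices to show that if `A = A(x, y)` and `A' = A(x', y')` are positive definite, then so is the
matrix `A(m)` at the midpoint, and `det A · det A' ≤ (det A(m))²`.

For this, let `W` be the geometric mean of `A` and `A'`: `[[A, W], [W, A']] ≥ 0` and
`(det W)² = det A · det A'`. After the change of variables `V ↦ V U⁻¹` we may take `U = 1`. Adding
the Gram matrix `[[Vᵀ diag(eʸ) V, Vᵀ diag(e^{(y+y')/2}) V], [⋯, Vᵀ diag(e^{y'}) V]] ≥ 0` gives
`[[diag(eˣ), Z], [Z, diag(e^{x'})]] ≥ 0` with `Z = W + Vᵀ diag(e^{(y+y')/2}) V`. For commuting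
diagonal blocks this forces `Z ≤ diag(e^{(x+x')/2})`, that is `W ≤ A(m)`, and determinants are
monotone for the Loewner order.
-/

open Set Matrix
open scoped MatrixOrder

theorem Icc_subset_of_isClosed_of_midpoint_mem {T : Set ℝ} (hT : IsClosed T)
    (hmid : ∀ s ∈ T, ∀ t ∈ T, midpoint ℝ s t ∈ T) {a b : ℝ} (ha : a ∈ T) (hb : b ∈ T) :
    Icc a b ⊆ T := by
  intro c ⟨hac, hcb⟩
  by_contra hc
  set l := sSup (T ∩ Icc a c)
  set r := sInf (T ∩ Icc c b)
  have hl : l ∈ T ∩ Icc a c :=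
    (hT.inter isClosed_Icc).csSup_mem ⟨a, ha, left_mem_Icc.2 hac⟩ bddAbove_Icc.inter_of_right
  have hr : r ∈ T ∩ Icc c b :=
    (hT.inter isClosed_Icc).csInf_mem ⟨b, hb, right_mem_Icc.2 hcb⟩ bddBelow_Icc.inter_of_right
  have hlc : l < c := lt_of_le_of_ne hl.2.2 (fun h => hc (h ▸ hl.1))
  have hcr : c < r := lt_of_le_of_ne hr.2.1 (fun h => hc (h ▸ hr.1))
  have hm := hmid l hl.1 r hr.1
  rw [midpoint_eq_smul_add, invOf_eq_inv, smul_eq_mul] at hm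
  rcases le_total (2⁻¹ * (l + r)) c with h | h
  · have hmem : 2⁻¹ * (l + r) ∈ T ∩ Icc a c := ⟨hm, by linarith [hl.2.1], h⟩
    linarith [le_csSup bddAbove_Icc.inter_of_right hmem]
  · have hmem : 2⁻¹ * (l + r) ∈ T ∩ Icc c b := ⟨hm, h, by linarith [hr.2.2]⟩
    linarith [csInf_le bddBelow_Icc.inter_of_right hmem]

section MidpointConvexity

variable {E : Type*} [AddCommGroup E] [Module ℝ E] [TopologicalSpace E] [IsTopologicalAddGroup E]
  [ContinuousSMul ℝ E]

theorem IsClosed.convex_of_midpoint_mem {T : Set E} (hT : IsClosed T)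
    (hmid : ∀ x ∈ T, ∀ y ∈ T, midpoint ℝ x y ∈ T) : Convex ℝ T := by
  refine convex_iff_segment_subset.2 fun x hx y hy => ?_
  rw [segment_eq_image_lineMap, image_subset_iff]
  refine Icc_subset_of_isClosed_of_midpoint_mem (hT.preimage AffineMap.lineMap_continuous)
    (fun s hs t ht => ?_) (by simpa using hx) (by simpa using hy)
  simpa [mem_preimage, AffineMap.map_midpoint] using hmid _ hs _ ht

open Real in
theorem concaveOn_log_of_mul_le_sq_midpoint {C : Set E} (hC : IsClosed C) {d : E → ℝ}
    (hd : Continuous d) (hd₀ : ∀ x ∈ C, 0 ≤ d x)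
    (hmid : ∀ x ∈ C, ∀ y ∈ C, 0 < d x → 0 < d y →
      midpoint ℝ x y ∈ C ∧ d x * d y ≤ d (midpoint ℝ x y) ^ 2) :
    ConcaveOn ℝ {x | x ∈ C ∧ 0 < d x} fun x => log (d x) := by
  refine concaveOn_of_convex_hypograph ?_
  have hypograph : {p : E × ℝ | p.1 ∈ {x | x ∈ C ∧ 0 < d x} ∧ p.2 ≤ log (d p.1)} =
      {p | p.1 ∈ C ∧ exp p.2 ≤ d p.1} := by
    ext ⟨x, r⟩
    simp only [mem_ofPred_eq]
    exact ⟨fun ⟨⟨hx, hdx⟩, hr⟩ => ⟨hx, (le_log_iff_exp_le hdx).1 hr⟩,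
      fun ⟨hx, hr⟩ => ⟨⟨hx, (exp_pos r).trans_le hr⟩,
        (le_log_iff_exp_le ((exp_pos r).trans_le hr)).2 hr⟩⟩
  rw [hypograph]
  refine IsClosed.convex_of_midpoint_mem ((hC.preimage continuous_fst).inter
    (isClosed_le (continuous_exp.comp continuous_snd) (hd.comp continuous_fst))) ?_
  rintro ⟨x, r⟩ ⟨hx, hr⟩ ⟨y, s⟩ ⟨hy, hs⟩
  obtain ⟨hm, hle⟩ := hmid x hx y hy ((exp_pos r).trans_le hr) ((exp_pos s).trans_le hs)
  refine ⟨hm, (pow_le_pow_iff_left₀ (exp_pos _).le (hd₀ _ hm) two_ne_zero).1 ?_⟩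
  calc exp (midpoint ℝ r s) ^ 2 = exp r * exp s := by
        rw [← exp_nat_mul, ← exp_add, midpoint_eq_smul_add, invOf_eq_inv, smul_eq_mul]; ring_nf
    _ ≤ d x * d y := mul_le_mul hr hs (exp_pos s).le (hd₀ x hx)
    _ ≤ _ := hle

end MidpointConvexity

namespace Matrix

section Gram

variable {m n p R : Type*} [Fintype m] [Finite n] [Finite p] [CommRing R] [PartialOrder R]
  [StarRing R] [StarOrderedRing R]

theorem posSemidef_fromBlocks_conjTranspose_mul (X : Matrix m n R) (Y : Matrix m p R) :
    (fromBlocks (Xᴴ * X) (Xᴴ * Y) (Yᴴ * X) (Yᴴ * Y)).PosSemidef := by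
  simpa [conjTranspose_fromCols_eq_fromRows_conjTranspose, fromRows_mul_fromCols] using
    posSemidef_conjTranspose_mul_self (fromCols X Y)

end Gram

theorem isClosed_setOf_posSemidef {n : Type*} [Fintype n] :
    IsClosed {A : Matrix n n ℝ | A.PosSemidef} := by
  simp only [posSemidef_iff_dotProduct_mulVec, Set.ofPred_and, Set.ofPred_forall]
  refine (isClosed_eq (by fun_prop) continuous_id).inter (isClosed_iInter fun x => ?_)
  exact isClosed_le continuous_const (by fun_prop)

variable {n : Type*} [Fintype n] [DecidableEq n]

theorem PosDef.exists_posDef_mul_self_eq {A : Matrix n n ℝ} (hA : A.PosDef) :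
    ∃ P : Matrix n n ℝ, P.PosDef ∧ P * P = A := by
  have hP : (CFC.sqrt A).PosSemidef := (CFC.sqrt_nonneg A).posSemidef
  have hPP : CFC.sqrt A * CFC.sqrt A = A := CFC.sqrt_mul_sqrt_self A hA.posSemidef.nonneg
  refine ⟨CFC.sqrt A, hP.posDef_iff_det_ne_zero.2 fun h0 => hA.det_pos.ne' ?_, hPP⟩
  rw [← hPP, det_mul, h0, zero_mul]

theorem one_le_det_of_one_le {C : Matrix n n ℝ} (h : 1 ≤ C) : 1 ≤ C.det := by
  have hC : C.IsHermitian := by simpa using (le_iff.1 h).isHermitian.add isHermitian_one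
  have hspec := (algebraMap_le_iff_le_spectrum (R := ℝ) (a := C) (r := 1) hC.isSelfAdjoint).1
    (by simpa using h)
  rw [hC.det_eq_prod_eigenvalues]
  exact Finset.one_le_prod fun i _ => by simpa using hspec _ (hC.eigenvalues_mem_spectrum_real i)

theorem det_le_det_of_le {A B : Matrix n n ℝ} (hA : A.PosDef) (hAB : A ≤ B) :
    A.det ≤ B.det := by
  obtain ⟨P, hP, rfl⟩ := hA.exists_posDef_mul_self_eq
  have hPu : IsUnit P.det := (isUnit_iff_isUnit_det P).1 hP.isUnit
  have hPinv : star P⁻¹ = P⁻¹ := hP.isHermitian.inv.eq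
  have h1 : 1 ≤ P⁻¹ * B * P⁻¹ := by
    simpa [hPinv, Matrix.mul_assoc, nonsing_inv_mul P hPu, ← Matrix.mul_assoc,
      mul_nonsing_inv P hPu] using star_left_conjugate_le_conjugate hAB P⁻¹
  have hB : B = P * (P⁻¹ * B * P⁻¹) * P := by
    rw [← Matrix.mul_assoc P, ← Matrix.mul_assoc P, mul_nonsing_inv P hPu, Matrix.one_mul,
      Matrix.mul_assoc, nonsing_inv_mul P hPu, Matrix.mul_one]
  rw [hB, det_mul, det_mul, det_mul]
  nlinarith [one_le_det_of_one_le h1, mul_self_nonneg P.det]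

theorem PosDef.exists_geomMean {A B : Matrix n n ℝ} (hA : A.PosDef) (hB : B.PosDef) :
    ∃ W : Matrix n n ℝ, W.PosDef ∧ (fromBlocks A W W B).PosSemidef ∧
      W.det ^ 2 = A.det * B.det := by
  obtain ⟨P, hP, rfl⟩ := hA.exists_posDef_mul_self_eq
  have hPu : IsUnit P := hP.isUnit
  have hPT : Pᵀ = P := by simpa using hP.isHermitian.eq
  have hC : (P⁻¹ * B * P⁻¹).PosDef := by
    have := (IsUnit.posDef_star_left_conjugate_iff (isUnit_nonsing_inv_iff.2 hPu)).2 hB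
    rwa [star_eq_conjTranspose, hP.isHermitian.inv.eq] at this
  obtain ⟨R, hR, hRR⟩ := hC.exists_posDef_mul_self_eq
  have hRT : Rᵀ = R := by simpa using hR.isHermitian.eq
  have hPd : IsUnit P.det := (isUnit_iff_isUnit_det P).1 hPu
  refine ⟨P * R * P, ?_, ?_, ?_⟩
  · have := (IsUnit.posDef_star_left_conjugate_iff hPu).2 hR
    rwa [star_eq_conjTranspose, hP.isHermitian.eq] at this
  · have hB' : P * (R * (R * P)) = B := by
      rw [← Matrix.mul_assoc R, hRR]
      simp [Matrix.mul_assoc, nonsing_inv_mul P hPd, mul_nonsing_inv_cancel_left P _ hPd]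
    simpa [hPT, hRT, hB', Matrix.mul_assoc] using
      posSemidef_fromBlocks_conjTranspose_mul P (R * P)
  · have hdetR : R.det ^ 2 = B.det / P.det ^ 2 := by
      rw [sq, ← det_mul, hRR, det_mul, det_mul, det_nonsing_inv, Ring.inverse_eq_inv']
      field_simp
    have hPd0 : P.det ≠ 0 := hPd.ne_zero
    calc (P * R * P).det ^ 2 = P.det ^ 4 * R.det ^ 2 := by simp only [det_mul]; ring
      _ = (P * P).det * B.det := by rw [hdetR, det_mul]; field_simp

theorem sum_sq_mulVec_div_le_of_posSemidef_fromBlocks {d d' : n → ℝ} (hd : ∀ i, 0 < d i)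
    {Z : Matrix n n ℝ} (hZ : Z.IsHermitian)
    (h : (fromBlocks (diagonal d) Z Z (diagonal d')).PosSemidef) (v : n → ℝ) :
    ∑ i, (Z *ᵥ v) i ^ 2 / d i ≤ ∑ i, d' i * v i ^ 2 := by
  have hD : (diagonal d).PosDef := posDef_diagonal_iff.2 hd
  let := hD.isUnit.invertible
  have hDinv : (diagonal d)⁻¹ = diagonal fun i => (d i)⁻¹ :=
    inv_eq_left_inv (by simp [diagonal_mul_diagonal, fun i => inv_mul_cancel₀ (hd i).ne'])
  have hZT : Zᵀ = Z := by simpa using hZ.eq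
  have hschur := (hD.fromBlocks₁₁ Z (diagonal d')).1 (by rwa [hZ.eq])
  rw [hZ.eq, hDinv] at hschur
  have hq := hschur.dotProduct_mulVec_nonneg v
  rw [star_trivial, sub_mulVec, dotProduct_sub, ← mulVec_mulVec, ← mulVec_mulVec,
    dotProduct_mulVec v Z, ← mulVec_transpose, hZT, sub_nonneg] at hq
  calc ∑ i, (Z *ᵥ v) i ^ 2 / d i = (Z *ᵥ v) ⬝ᵥ diagonal (fun i => (d i)⁻¹) *ᵥ (Z *ᵥ v) := by
        simp only [dotProduct, mulVec_diagonal]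
        exact Finset.sum_congr rfl fun i _ => by ring
    _ ≤ v ⬝ᵥ diagonal d' *ᵥ v := hq
    _ = ∑ i, d' i * v i ^ 2 := by
        simp only [dotProduct, mulVec_diagonal]
        exact Finset.sum_congr rfl fun i _ => by ring

theorem le_diagonal_of_posSemidef_fromBlocks {d d' c : n → ℝ} (hd : ∀ i, 0 < d i)
    (hc : ∀ i, 0 ≤ c i) (hcd : ∀ i, c i ^ 2 = d i * d' i) {Z : Matrix n n ℝ} (hZ : Z.IsHermitian)
    (h : (fromBlocks (diagonal d) Z Z (diagonal d')).PosSemidef) : Z ≤ diagonal c := by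
  have hH : (diagonal c - Z).IsHermitian := (isHermitian_diagonal c).sub hZ
  rw [le_iff, hH.posSemidef_iff_eigenvalues_nonneg]
  -- an eigenvector `v` for an eigenvalue `μ < 0` has `Z v = (c - μ) v`, too large for the Schur
  -- complement inequality
  intro i
  by_contra! hμ
  rw [Pi.zero_apply] at hμ
  set μ := hH.eigenvalues i
  set v := (hH.eigenvectorBasis i).ofLp
  have hv0 : v ≠ 0 := fun h0 => hH.eigenvectorBasis.orthonormal.ne_zero i (by
    simpa [v] using congrArg (WithLp.toLp 2) h0)
  have hZv : ∀ j, (Z *ᵥ v) j = (c j - μ) * v j := fun j => by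
    have := congrFun (hH.mulVec_eigenvectorBasis i) j
    simp only [sub_mulVec, mulVec_diagonal, Pi.sub_apply, Pi.smul_apply, smul_eq_mul] at this
    linarith
  have hq := sum_sq_mulVec_div_le_of_posSemidef_fromBlocks hd hZ h v
  simp only [hZv] at hq
  have hgap : ∀ j, ((c j - μ) * v j) ^ 2 / d j - d' j * v j ^ 2 =
      (μ ^ 2 - 2 * c j * μ) * v j ^ 2 / d j := fun j => by
    have hd'j : d' j = c j ^ 2 / d j := by rw [hcd j]; field_simp [(hd j).ne']
    rw [hd'j]; field_simp; ring
  have hpos : ∀ j, 0 < μ ^ 2 - 2 * c j * μ := fun j => by nlinarith [hc j]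
  obtain ⟨j, hj⟩ := Function.ne_iff.1 hv0
  have hlt : ∑ j, d' j * v j ^ 2 < ∑ j, ((c j - μ) * v j) ^ 2 / d j :=
    Finset.sum_lt_sum
      (fun k _ => sub_nonneg.1 ((hgap k).symm ▸ by positivity [(hpos k).le, (hd k).le]))
      ⟨j, Finset.mem_univ j, sub_pos.1 ((hgap j).symm ▸
        div_pos (mul_pos (hpos j) (pow_two_pos_of_ne_zero hj)) (hd j))⟩
  linarith

end Matrix

theorem Real.exp_midpoint (a b : ℝ) :
    Real.exp (midpoint ℝ a b) = Real.exp (a / 2) * Real.exp (b / 2) := by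
  rw [← Real.exp_add, midpoint_eq_smul_add, invOf_eq_inv, smul_eq_mul]; ring_nf

section ExpDiffMatrix

open Real

variable {ι κ : Type*} [Fintype ι] [Fintype κ] [DecidableEq κ]

theorem posSemidef_fromBlocks_conj_diagonal_exp (V : Matrix κ ι ℝ) (y y' : κ → ℝ) :
    (fromBlocks (Vᵀ * diagonal (fun j => exp (y j)) * V)
      (Vᵀ * diagonal (fun j => exp (midpoint ℝ y y' j)) * V)
      (Vᵀ * diagonal (fun j => exp (midpoint ℝ y y' j)) * V)
      (Vᵀ * diagonal (fun j => exp (y' j)) * V)).PosSemidef := by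
  have hgram : ∀ a b : κ → ℝ, (diagonal (fun j => exp (a j / 2)) * V)ᴴ *
      (diagonal (fun j => exp (b j / 2)) * V) =
        Vᵀ * diagonal (fun j => exp (midpoint ℝ a b j)) * V := by
    intro a b
    rw [conjTranspose_mul, diagonal_conjTranspose, conjTranspose_eq_transpose_of_trivial,
      Matrix.mul_assoc, ← Matrix.mul_assoc (diagonal _), diagonal_mul_diagonal, ← Matrix.mul_assoc]
    simp [exp_midpoint]
  have := posSemidef_fromBlocks_conjTranspose_mul (diagonal (fun j => exp (y j / 2)) * V)
    (diagonal (fun j => exp (y' j / 2)) * V)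
  rwa [hgram, hgram, hgram, hgram, midpoint_self, midpoint_self, midpoint_comm y' y] at this

variable [DecidableEq ι]

noncomputable def expDiffMatrix (U : Matrix ι ι ℝ) (V : Matrix κ ι ℝ) (x : ι → ℝ) (y : κ → ℝ) :
    Matrix ι ι ℝ :=
  Uᵀ * diagonal (fun i => exp (x i)) * U - Vᵀ * diagonal (fun j => exp (y j)) * V

theorem continuous_expDiffMatrix (U : Matrix ι ι ℝ) (V : Matrix κ ι ℝ) :
    Continuous fun p : (ι → ℝ) × (κ → ℝ) => expDiffMatrix U V p.1 p.2 := by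
  unfold expDiffMatrix
  fun_prop

variable {U : Matrix ι ι ℝ} {V : Matrix κ ι ℝ} {x x' : ι → ℝ} {y y' : κ → ℝ}

theorem exists_geomMean_le_expDiffMatrix_one_midpoint
    (h : (expDiffMatrix 1 V x y).PosDef) (h' : (expDiffMatrix 1 V x' y').PosDef) :
    ∃ W : Matrix ι ι ℝ, W.PosDef ∧ W ≤ expDiffMatrix 1 V (midpoint ℝ x x') (midpoint ℝ y y') ∧
      W.det ^ 2 = (expDiffMatrix 1 V x y).det * (expDiffMatrix 1 V x' y').det := by
  obtain ⟨W, hW, hblock, hdet⟩ := h.exists_geomMean h'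
  refine ⟨W, hW, ?_, hdet⟩
  have hsum := hblock.add (posSemidef_fromBlocks_conj_diagonal_exp V y y')
  simp only [fromBlocks_add, expDiffMatrix, transpose_one, Matrix.one_mul, Matrix.mul_one,
    sub_add_cancel] at hsum
  have hVm : (Vᵀ * diagonal (fun j => exp (midpoint ℝ y y' j)) * V).IsHermitian := by
    simpa using isHermitian_conjTranspose_mul_mul V (isHermitian_diagonal _)
  have hsq : ∀ i, exp (midpoint ℝ x x' i) ^ 2 = exp (x i) * exp (x' i) := fun i => by
    rw [show midpoint ℝ x x' i = midpoint ℝ (x i) (x' i) from rfl, exp_midpoint, mul_pow,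
      ← exp_nat_mul, ← exp_nat_mul]
    ring_nf
  have hle := le_diagonal_of_posSemidef_fromBlocks (fun i => exp_pos (x i))
    (fun i => (exp_pos _).le) hsq (hW.isHermitian.add hVm) hsum
  rw [expDiffMatrix, transpose_one, Matrix.one_mul, Matrix.mul_one]
  exact le_sub_iff_add_le.2 hle

theorem isUnit_of_posDef_expDiffMatrix (h : (expDiffMatrix U V x y).PosDef) : IsUnit U := by
  have hV : (Vᵀ * diagonal (fun j => exp (y j)) * V).PosSemidef := by
    simpa using (PosSemidef.diagonal fun j => (exp_pos (y j)).le).conjTranspose_mul_mul_same V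
  have hUDU := h.add_posSemidef hV
  rw [expDiffMatrix, sub_add_cancel] at hUDU
  have hdet := (isUnit_iff_isUnit_det _).1 hUDU.isUnit
  rw [det_mul] at hdet
  exact (isUnit_iff_isUnit_det U).2 (isUnit_of_mul_isUnit_right hdet)

theorem expDiffMatrix_eq_conj (hU : IsUnit U) :
    expDiffMatrix U V x y = Uᵀ * expDiffMatrix 1 (V * U⁻¹) x y * U := by
  have hUd : IsUnit U.det := (isUnit_iff_isUnit_det U).1 hU
  have hUTd : IsUnit Uᵀ.det := by rwa [det_transpose]
  simp [expDiffMatrix, Matrix.mul_sub, Matrix.sub_mul, Matrix.mul_assoc, transpose_nonsing_inv,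
    nonsing_inv_mul U hUd, mul_nonsing_inv_cancel_left Uᵀ _ hUTd]

theorem posDef_and_det_mul_le_sq_expDiffMatrix_midpoint
    (h : (expDiffMatrix U V x y).PosDef) (h' : (expDiffMatrix U V x' y').PosDef) :
    (expDiffMatrix U V (midpoint ℝ x x') (midpoint ℝ y y')).PosDef ∧
      (expDiffMatrix U V x y).det * (expDiffMatrix U V x' y').det ≤
        (expDiffMatrix U V (midpoint ℝ x x') (midpoint ℝ y y')).det ^ 2 := by
  have hU := isUnit_of_posDef_expDiffMatrix h
  have hconj : ∀ B : Matrix ι ι ℝ, (Uᵀ * B * U).PosDef ↔ B.PosDef := fun B => by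
    rw [← conjTranspose_eq_transpose_of_trivial, ← star_eq_conjTranspose]
    exact IsUnit.posDef_star_left_conjugate_iff hU
  simp only [expDiffMatrix_eq_conj hU, hconj, det_mul, det_transpose] at h h' ⊢
  obtain ⟨W, hW, hWle, hWdet⟩ := exists_geomMean_le_expDiffMatrix_one_midpoint h h'
  have hmid := hW.add_posSemidef (le_iff.1 hWle)
  rw [add_sub_cancel] at hmid
  refine ⟨hmid, ?_⟩
  calc _ = U.det ^ 4 * W.det ^ 2 := by rw [hWdet]; ring
    _ ≤ U.det ^ 4 * (expDiffMatrix 1 (V * U⁻¹) (midpoint ℝ x x') (midpoint ℝ y y')).det ^ 2 := by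
      gcongr
      · exact hW.det_pos.le
      · exact det_le_det_of_le hW hWle
    _ = _ := by ring

end ExpDiffMatrix

theorem stmt15_general {m n : ℕ}
    (U : Matrix (Fin n) (Fin n) ℝ)
    (V : Matrix (Fin (m - n)) (Fin n) ℝ) :
    ConcaveOn ℝ {p : (Fin n → ℝ) × (Fin (m - n) → ℝ) |
        (Uᵀ * Matrix.diagonal (fun i => Real.exp (p.1 i)) * U -
          Vᵀ * Matrix.diagonal (fun j => Real.exp (p.2 j)) * V).PosDef}
      (fun p => Real.log
        (Uᵀ * Matrix.diagonal (fun i => Real.exp (p.1 i)) * U -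
          Vᵀ * Matrix.diagonal (fun j => Real.exp (p.2 j)) * V).det) := by
  change ConcaveOn ℝ {p : (Fin n → ℝ) × (Fin (m - n) → ℝ) | (expDiffMatrix U V p.1 p.2).PosDef}
    fun p => Real.log (expDiffMatrix U V p.1 p.2).det
  have hΩ : {p : (Fin n → ℝ) × (Fin (m - n) → ℝ) | (expDiffMatrix U V p.1 p.2).PosDef} =
      {p | p ∈ {p | (expDiffMatrix U V p.1 p.2).PosSemidef} ∧
        0 < (expDiffMatrix U V p.1 p.2).det} := by
    ext p
    exact ⟨fun h => ⟨h.posSemidef, h.det_pos⟩, fun h => h.1.posDef_iff_det_ne_zero.2 h.2.ne'⟩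
  rw [hΩ]
  refine concaveOn_log_of_mul_le_sq_midpoint
    (isClosed_setOf_posSemidef.preimage (continuous_expDiffMatrix U V))
    (continuous_expDiffMatrix U V).matrix_det (fun p hp => hp.det_nonneg)
    fun p hp q hq hp' hq' => ?_
  obtain ⟨hmid, hdet⟩ := posDef_and_det_mul_le_sq_expDiffMatrix_midpoint
    (hp.posDef_iff_det_ne_zero.2 hp'.ne') (hq.posDef_iff_det_ne_zero.2 hq'.ne')
  exact ⟨hmid.posSemidef, hdet⟩

theorem stmt15 {m n : ℕ} (hn : 1 ≤ n) (hm : n ≤ m)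
    (U : Matrix (Fin n) (Fin n) ℝ) (hU : IsUnit U.det)
    (V : Matrix (Fin (m - n)) (Fin n) ℝ) :
    ConcaveOn ℝ {p : (Fin n → ℝ) × (Fin (m - n) → ℝ) |
        (Uᵀ * Matrix.diagonal (fun i => Real.exp (p.1 i)) * U -
          Vᵀ * Matrix.diagonal (fun j => Real.exp (p.2 j)) * V).PosDef}
      (fun p => Real.log
        (Uᵀ * Matrix.diagonal (fun i => Real.exp (p.1 i)) * U -
          Vᵀ * Matrix.diagonal (fun j => Real.exp (p.2 j)) * V).det) :=
  stmt15_general U V
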